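/- arXiv:math/0007043 — 3 statements merged into one kernel-verified Lean document; each statement's English description precedes it below -/
import Mathlib

section
/- Let α be a partition with multiplicities (a_1, …, a_n) (so a_i parts equal to i) and let X be a type. There is a bijection between the product ∏_{i=1}^n Sym^{a_i}(X) and the set of finitely supported functions g from X to the set of partitions (allowing the empty partition) such that ∑_{x ∈ X} g(x) = α, where the sum of partitions is taken multiplicity-wise (the multiplicity of i in ∑_x g(x) is ∑_x (multiplicity of i in g(x))). -/
/-!
A tuple `ξ ∈ ∏ᵢ Sym^{aᵢ}(X)` is the same as a family of multiplicity functions `fᵢ : X →₀ ℕ` of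
total mass `aᵢ` (`Sym.equivNatSum`). Such a family is packed into the partition-valued function
`x ↦ ∑ᵢ fᵢ(x) • [i]`, i.e. `x ↦ (1^{f₁(x)}, …, n^{fₙ(x)})`, and unpacked by reading off the
multiplicity of the part `i`. Summing over `x` turns the mass conditions into the single
condition `∑ₓ g(x) = α`; conversely, since multiplicities are natural numbers, this condition
forces every `g(x)` to use only the parts `1, …, n`, so packing the unpacked family returns `g`.
-/

namespace Finsupp

variable {ι κ X M : Type*} [Fintype ι] {e : ι → κ}

theorem sum_single_apply_of_injective [AddCommMonoid M] (he : e.Injective) (c : ι → M) (i : ι) :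
    (∑ j, single (e j) (c j)) (e i) = c i := by
  rw [finsetSum_apply, Finset.sum_eq_single i (fun j _ hji => single_eq_of_ne (he.ne hji).symm)
    (by simp), single_eq_same]

theorem sum_single_apply_of_notMem_range [AddCommMonoid M] (c : ι → M) {k : κ}
    (hk : k ∉ Set.range e) : (∑ j, single (e j) (c j)) k = 0 := by
  rw [finsetSum_apply]
  exact Finset.sum_eq_zero fun j _ => single_eq_of_ne fun hkj => hk ⟨j, hkj.symm⟩

variable (e) in
noncomputable def ofFamily (F : ι → X →₀ ℕ) : X →₀ κ →₀ ℕ :=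
  ∑ i, (F i).mapRange (single (e i)) (single_zero _)

theorem ofFamily_apply (F : ι → X →₀ ℕ) (x : X) :
    ofFamily e F x = ∑ i, single (e i) (F i x) := by
  simp only [ofFamily, finsetSum_apply, mapRange_apply]

theorem sum_ofFamily (F : ι → X →₀ ℕ) :
    (ofFamily e F).sum (fun _ p => p) = ∑ i, single (e i) ((F i).sum fun _ => id) := by
  rw [ofFamily, ← sum_finsetSum_index (fun _ => rfl) (fun _ _ _ => rfl)]
  refine Finset.sum_congr rfl fun i _ => ?_
  rw [sum_mapRange_index fun _ => rfl]
  exact (map_finsuppSum (singleAddHom (e i)) (F i) fun _ => id).symm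

theorem sum_mapRange_eval (g : X →₀ κ →₀ ℕ) (k : κ) :
    (g.mapRange (· k) rfl).sum (fun _ => id) = (g.sum fun _ p => p) k := by
  rw [sum_mapRange_index fun _ => rfl, sum_apply]
  rfl

theorem apply_eq_zero_of_sum_eq_sum_single {g : X →₀ κ →₀ ℕ} {a : ι → ℕ}
    (hg : (g.sum fun _ p => p) = ∑ i, single (e i) (a i)) (x : X) {k : κ}
    (hk : k ∉ Set.range e) : g x k = 0 := by
  have hle : g x ≤ g.sum fun _ p => p := by
    by_cases hx : x ∈ g.support
    · exact Finset.single_le_sum (f := g) (fun _ _ => zero_le) hx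
    · simp [notMem_support_iff.mp hx]
  have := hle k
  rw [hg, sum_single_apply_of_notMem_range a hk] at this
  exact Nat.eq_zero_of_le_zero this

noncomputable def familyEquiv (he : e.Injective) (a : ι → ℕ) :
    {F : ι → X →₀ ℕ // ∀ i, (F i).sum (fun _ => id) = a i} ≃
      {g : X →₀ κ →₀ ℕ // (g.sum fun _ p => p) = ∑ i, single (e i) (a i)} where
  toFun F := ⟨ofFamily e F, by simp only [sum_ofFamily, F.2]⟩
  invFun g := ⟨fun i => g.1.mapRange (· (e i)) rfl, fun i => by
    rw [sum_mapRange_eval, g.2, sum_single_apply_of_injective he]⟩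
  left_inv F := by
    ext i x
    simp [ofFamily_apply, sum_single_apply_of_injective he]
  right_inv g := by
    ext x k
    by_cases hk : k ∈ Set.range e
    · obtain ⟨i, rfl⟩ := hk
      simp [ofFamily_apply, sum_single_apply_of_injective he]
    · simp [ofFamily_apply, sum_single_apply_of_notMem_range _ hk,
        apply_eq_zero_of_sum_eq_sum_single g.2 x hk]

end Finsupp

/-- Let `α` be a partition with `a i` parts equal to `i` (for `i = 1, …, n`), encoded as the
finitely supported multiplicity function `∑_{i=1}^n single i (a i) : ℕ →₀ ℕ` (partitions are
identified with finitely supported functions on the positive integers recording multiplicities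
of parts; the empty partition is the zero function).  For any type `X` there is a bijection
between `∏_{i=1}^n Sym^{a_i}(X)` and the finitely supported functions `g` from `X` to
partitions with `∑_{x ∈ X} g x = α`, the sum of partitions being taken multiplicity-wise. -/
theorem stmt4 (n : ℕ) (a : Fin n → ℕ) (X : Type*) [DecidableEq X] :
    Nonempty ((∀ i : Fin n, Sym X (a i)) ≃
      {g : X →₀ (ℕ →₀ ℕ) //
        (g.sum fun _ p => p) = ∑ i : Fin n, Finsupp.single ((i : ℕ) + 1) (a i)}) :=
  ⟨(Equiv.piCongrRight fun i => Sym.equivNatSum X (a i)).trans <|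
    Equiv.subtypePiEquivPi.symm.trans <|
      Finsupp.familyEquiv (Nat.succ_injective.comp Fin.val_injective) a⟩
end

section
/- For complex numbers q, w with |q| < 1 and w ≠ 0, the following identity holds: ∑_{n ∈ ℤ} (−1)^n q^{n(n+1)/2} w^{2n+1} = (w − w^{−1}) ∏_{n≥1} (1 − q^n)(1 − q^n w²)(1 − q^n w^{−2}). -/
open scoped BigOperators

open Filter Topology Finset

namespace JTP


/-- A product `∏ (1 + u n)` with `∑ ‖u n‖ < ∞` is multipliable (in ℂ). -/
lemma multipliable_one_add {u : ℕ → ℂ} (hu : Summable fun n => ‖u n‖) :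
    Multipliable (fun n => 1 + u n) := by
  by_cases h : ∀ n, 1 + u n ≠ 0
  · refine Complex.multipliable_of_summable_log ?_
    have h0 : Tendsto (fun n => ‖u n‖) atTop (𝓝 0) := hu.tendsto_atTop_zero
    have hev : ∀ᶠ n in atTop, ‖Complex.log (1 + u n)‖ ≤ (3/2) * ‖u n‖ := by
      filter_upwards [h0.eventually (gt_mem_nhds (by norm_num : (0:ℝ) < 1/2))] with n hn
      exact Complex.norm_log_one_add_half_le_self hn.le
    rw [← Nat.cofinite_eq_atTop] at hev
    exact (hu.mul_left (3/2)).of_norm_bounded_eventually hev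
  · push_neg at h
    obtain ⟨n0, hn0⟩ := h
    refine ⟨0, ?_⟩
    have hev : ∀ᶠ s : Finset ℕ in atTop, ∏ i ∈ s, (1 + u i) = 0 := by
      filter_upwards [eventually_ge_atTop ({n0} : Finset ℕ)] with s hs
      exact Finset.prod_eq_zero (hs (Finset.mem_singleton_self n0)) hn0
    exact Tendsto.congr' (hev.mono fun s hs => hs.symm) tendsto_const_nhds

lemma multipliable_one_sub_mul {q : ℂ} (hq : ‖q‖ < 1) (u : ℂ) :
    Multipliable (fun n : ℕ => 1 - q ^ (n + 1) * u) := by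
  have := multipliable_one_add (u := fun n : ℕ => -(q ^ (n + 1) * u)) ?_
  · simpa [sub_eq_add_neg] using this
  · simp only [norm_neg, norm_mul, norm_pow]
    apply Summable.mul_right
    have : Summable fun n : ℕ => ‖q‖ ^ n := summable_geometric_of_lt_one (norm_nonneg q)  hq
    simpa [pow_succ'] using this.mul_left ‖q‖



variable {q : ℂ}

noncomputable def Q (q : ℂ) (n : ℕ) : ℂ := ∏ j ∈ Finset.range n, (1 - q ^ (j + 1))

lemma fac_ne (hq : ‖q‖ < 1) (j : ℕ) : 1 - q ^ (j + 1) ≠ 0 := by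
  intro h
  have h1 : q ^ (j+1) = 1 := by linear_combination -h
  have : ‖q ^ (j+1)‖ < 1 := by
    rw [norm_pow]
    exact pow_lt_one₀ (norm_nonneg q) hq (Nat.succ_ne_zero j)
  rw [h1] at this; simp at this

lemma Q_ne_zero (hq : ‖q‖ < 1) (n : ℕ) : Q q n ≠ 0 :=
  Finset.prod_ne_zero_iff.2 fun j _ => fac_ne hq j

/-- Gaussian binomial coefficient as a complex number. -/
noncomputable def qb (q : ℂ) (n k : ℕ) : ℂ :=
  if k ≤ n then Q q n / (Q q k * Q q (n - k)) else 0

lemma Q_zero (q : ℂ) : Q q 0 = 1 := Finset.prod_range_zero _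

lemma qb_zero (hq : ‖q‖ < 1) (n : ℕ) : qb q n 0 = 1 := by
  rw [qb, if_pos (Nat.zero_le n), Nat.sub_zero, Q_zero, one_mul, div_self (Q_ne_zero hq n)]

lemma qb_self (hq : ‖q‖ < 1) (n : ℕ) : qb q n n = 1 := by
  rw [qb, if_pos (le_refl n), Nat.sub_self, Q_zero, mul_one, div_self (Q_ne_zero hq n)]

lemma qb_of_gt {n k : ℕ} (h : n < k) : qb q n k = 0 := by
  simp [qb, Nat.not_le.2 h]

lemma Q_succ (q : ℂ) (n : ℕ) : Q q (n + 1) = Q q n * (1 - q ^ (n + 1)) :=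
  Finset.prod_range_succ _ n

lemma qb_pascal (hq : ‖q‖ < 1) (n k : ℕ) :
    qb q (n + 1) (k + 1) = qb q n (k + 1) + q ^ (n - k) * qb q n k := by
  rcases lt_trichotomy (k + 1) (n + 1) with h | h | h
  · have hk1n : k + 1 ≤ n := Nat.lt_succ_iff.1 h
    have hkn : k ≤ n := le_trans (Nat.le_succ k) hk1n
    have e1 : n + 1 - (k + 1) = n - k := by omega
    have e2 : n - (k + 1) = n - k - 1 := by omega
    have e3 : n - k - 1 + 1 = n - k := by omega
    rw [qb, qb, qb, if_pos (by omega), if_pos hk1n, if_pos hkn, e1, e2]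
    have hQn := Q_ne_zero hq n
    have hQk := Q_ne_zero hq k
    have hQk1 := Q_ne_zero hq (k + 1)
    have hQm := Q_ne_zero hq (n - k - 1)
    have hQnk := Q_ne_zero hq (n - k)
    have hpow : q ^ (n - k) * q ^ (k + 1) = q ^ (n + 1) := by
      rw [← pow_add]; congr 1; omega
    have key : Q q (n + 1) = Q q n * (1 - q ^ (n - k)) + q ^ (n - k) * Q q n * (1 - q ^ (k + 1)) := by
      rw [Q_succ]; linear_combination Q q n * hpow
    have h2 : Q q (n - k) = Q q (n - k - 1) * (1 - q ^ (n - k)) := by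
      rw [← e3, Q_succ, e3]
    have h3 : Q q (k + 1) = Q q k * (1 - q ^ (k + 1)) := Q_succ q k
    field_simp
    rw [key, h2, h3]
    ring
  · have hk : k = n := by omega
    subst hk
    rw [qb_self hq, qb_of_gt (Nat.lt_succ_self k), qb_self hq]
    simp
  · rw [qb_of_gt (by omega), qb_of_gt (by omega), qb_of_gt (by omega)]
    simp

lemma tri' (i : ℕ) : i * (i - 1) / 2 + i = (i + 1) * i / 2 := by
  rcases Nat.eq_zero_or_pos i with h0 | h0
  · subst h0; simp
  obtain ⟨j, rfl⟩ : ∃ j, i = j + 1 := ⟨i - 1, by omega⟩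
  have h1 : 2 ∣ (j + 1) * j := by
    rw [mul_comm]; exact (Nat.even_mul_succ_self j).two_dvd
  have h3 : (j + 1 + 1) * (j + 1) = (j + 1) * j + 2 * (j + 1) := by ring
  simp only [Nat.add_sub_cancel]
  omega

/-- Gauss's q-binomial theorem. -/
lemma gauss (hq : ‖q‖ < 1) (z : ℂ) (n : ℕ) :
    ∏ j ∈ Finset.range n, (1 + z * q ^ j)
      = ∑ k ∈ Finset.range (n + 1), qb q n k * q ^ (k * (k - 1) / 2) * z ^ k := by
  induction n with
  | zero => simp [qb_zero hq]
  | succ n ih =>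
    rw [Finset.prod_range_succ, ih]
    have expand : (∑ k ∈ Finset.range (n + 1), qb q n k * q ^ (k * (k - 1) / 2) * z ^ k)
          * (1 + z * q ^ n)
        = (∑ k ∈ Finset.range (n + 1), qb q n k * q ^ (k * (k - 1) / 2) * z ^ k)
          + (∑ k ∈ Finset.range (n + 1),
              qb q n k * q ^ (k * (k - 1) / 2) * z ^ k * (z * q ^ n)) := by
      rw [← Finset.sum_mul]; ring
    rw [expand]
    rw [Finset.sum_range_succ'
      (fun k => qb q (n + 1) k * q ^ (k * (k - 1) / 2) * z ^ k) (n + 1)]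
    have hPascal : ∀ i ∈ Finset.range (n + 1),
        qb q (n + 1) (i + 1) * q ^ ((i + 1) * ((i + 1) - 1) / 2) * z ^ (i + 1)
          = qb q n (i + 1) * q ^ ((i + 1) * ((i + 1) - 1) / 2) * z ^ (i + 1)
            + qb q n i * q ^ (i * (i - 1) / 2) * z ^ i * (z * q ^ n) := by
      intro i hi
      have hin : i ≤ n := Nat.lt_succ_iff.1 (Finset.mem_range.1 hi)
      rw [qb_pascal hq n i, add_mul, add_mul]
      congr 1
      have hexp : q ^ (n - i) * q ^ ((i + 1) * ((i + 1) - 1) / 2)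
          = q ^ (i * (i - 1) / 2) * q ^ n := by
        rw [← pow_add, ← pow_add]
        congr 1
        simp only [Nat.add_sub_cancel]
        have := tri' i
        omega
      calc q ^ (n - i) * qb q n i * q ^ ((i + 1) * ((i + 1) - 1) / 2) * z ^ (i + 1)
          = qb q n i * (q ^ (n - i) * q ^ ((i + 1) * ((i + 1) - 1) / 2)) * z ^ (i + 1) := by
            ring
        _ = qb q n i * (q ^ (i * (i - 1) / 2) * q ^ n) * z ^ (i + 1) := by rw [hexp]
        _ = qb q n i * q ^ (i * (i - 1) / 2) * z ^ i * (z * q ^ n) := by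
            rw [pow_succ]; ring
    rw [Finset.sum_congr rfl hPascal, Finset.sum_add_distrib]
    have hfirst : ∑ i ∈ Finset.range (n + 1),
        qb q n (i + 1) * q ^ ((i + 1) * ((i + 1) - 1) / 2) * z ^ (i + 1)
          = ∑ i ∈ Finset.range n,
        qb q n (i + 1) * q ^ ((i + 1) * ((i + 1) - 1) / 2) * z ^ (i + 1) := by
      rw [Finset.sum_range_succ, qb_of_gt (Nat.lt_succ_self n)]
      simp
    rw [hfirst]
    rw [qb_zero hq, ← qb_zero hq (n := n)]
    rw [Finset.sum_range_succ'
      (fun k => qb q n k * q ^ (k * (k - 1) / 2) * z ^ k) n]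
    ring



variable {q : ℂ}

/-- Sum of norms of logs of the factors. -/
noncomputable def Lg (q : ℂ) : ℝ := ∑' j : ℕ, ‖Complex.log (1 - q ^ (j + 1))‖

lemma summable_norm_log (hq : ‖q‖ < 1) :
    Summable fun j : ℕ => ‖Complex.log (1 - q ^ (j + 1))‖ := by
  have hgeo : Summable fun n : ℕ => ‖q‖ ^ (n + 1) :=
    ((summable_geometric_of_lt_one (norm_nonneg q) hq).mul_left ‖q‖).congr
      (fun n => by rw [pow_succ'])
  have h0 : Tendsto (fun n : ℕ => ‖q‖ ^ (n + 1)) atTop (𝓝 0) := hgeo.tendsto_atTop_zero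
  have hev : ∀ᶠ n in atTop, ‖(‖Complex.log (1 - q ^ (n + 1))‖)‖ ≤ (3/2) * ‖q‖ ^ (n + 1) := by
    filter_upwards [h0.eventually (gt_mem_nhds (by norm_num : (0:ℝ) < 1/2))] with n hn
    rw [Real.norm_of_nonneg (norm_nonneg _)]
    have := Complex.norm_log_one_add_half_le_self (z := -(q ^ (n+1)))
      (by rw [norm_neg, norm_pow]; exact hn.le)
    calc ‖Complex.log (1 - q ^ (n+1))‖ = ‖Complex.log (1 + -(q ^ (n+1)))‖ := by
            rw [sub_eq_add_neg]
      _ ≤ 3/2 * ‖-(q^(n+1))‖ := this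
      _ = 3/2 * ‖q‖^(n+1) := by rw [norm_neg, norm_pow]
  rw [← Nat.cofinite_eq_atTop] at hev
  exact (hgeo.mul_left (3/2)).of_norm_bounded_eventually hev

lemma Q_eq_exp (hq : ‖q‖ < 1) (n : ℕ) :
    Q q n = Complex.exp (∑ j ∈ Finset.range n, Complex.log (1 - q ^ (j + 1))) := by
  rw [Complex.exp_sum]
  exact Finset.prod_congr rfl fun j _ => (Complex.exp_log (fac_ne hq j)).symm

lemma norm_Q_le (hq : ‖q‖ < 1) (n : ℕ) : ‖Q q n‖ ≤ Real.exp (Lg q) := by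
  rw [Q_eq_exp hq, Complex.norm_exp]
  apply Real.exp_le_exp.2
  calc (∑ j ∈ Finset.range n, Complex.log (1 - q ^ (j + 1))).re
      ≤ ‖∑ j ∈ Finset.range n, Complex.log (1 - q ^ (j + 1))‖ := Complex.re_le_norm _
    _ ≤ ∑ j ∈ Finset.range n, ‖Complex.log (1 - q ^ (j + 1))‖ := norm_sum_le _ _
    _ ≤ Lg q := (summable_norm_log hq).sum_le_tsum _ (fun j _ => norm_nonneg _)

lemma le_norm_Q (hq : ‖q‖ < 1) (n : ℕ) : Real.exp (-Lg q) ≤ ‖Q q n‖ := by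
  rw [Q_eq_exp hq, Complex.norm_exp]
  apply Real.exp_le_exp.2
  have h1 : ‖∑ j ∈ Finset.range n, Complex.log (1 - q ^ (j + 1))‖ ≤ Lg q :=
    le_trans (norm_sum_le _ _)
      ((summable_norm_log hq).sum_le_tsum _ (fun j _ => norm_nonneg _))
  have h2 := Complex.abs_re_le_norm (∑ j ∈ Finset.range n, Complex.log (1 - q ^ (j + 1)))
  have h3 := abs_le.1 (le_trans h2 h1)
  linarith [h3.1]



variable {q x : ℂ}

-- helper cast lemmas
lemma nat_tri_cast (N : ℕ) : 2 * ((N * (N - 1) / 2 : ℕ) : ℤ) = (N : ℤ) * ((N : ℤ) - 1) := by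
  rcases N with _ | M
  · simp
  · have h : 2 ∣ (M + 1) * M := by
      rw [mul_comm]; exact (Nat.even_mul_succ_self M).two_dvd
    have h2 : 2 * ((M + 1) * M / 2) = (M + 1) * M := Nat.mul_div_cancel' h
    simp only [Nat.add_sub_cancel]
    have h3 : ((2 * ((M + 1) * M / 2) : ℕ) : ℤ) = (((M + 1) * M : ℕ) : ℤ) := by rw [h2]
    push_cast at h3 ⊢
    linarith

lemma int_tri (m : ℤ) : 2 * (m * (m + 1) / 2) = m * (m + 1) := by
  apply Int.mul_ediv_cancel'
  rcases Int.even_mul_succ_self m with ⟨c, hc⟩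
  exact ⟨c, by linarith⟩


lemma finite_jacobi (hq : ‖q‖ < 1) (hq0 : q ≠ 0) {x : ℂ} (hx : x ≠ 0) (N : ℕ) :
    (∏ j ∈ Finset.range N, (1 + x * q ^ (j + 1)))
      * (∏ j ∈ Finset.range N, (1 + x⁻¹ * q ^ j))
      = ∑ k ∈ Finset.range (2 * N + 1),
          qb q (2 * N) k * q ^ (((k : ℤ) - N) * (((k : ℤ) - N) + 1) / 2)
            * x ^ ((k : ℤ) - N) := by
  set z : ℂ := x * q ^ ((1 : ℤ) - N) with hz
  have hzq : ∀ i : ℕ, z * q ^ i = x * q ^ ((1 : ℤ) - N + i) := by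
    intro i
    rw [hz, mul_assoc, ← zpow_natCast q i, ← zpow_add₀ hq0]
  have hsecond : ∀ i : ℕ, z * q ^ (N + i) = x * q ^ (i + 1) := by
    intro i
    rw [hzq (N + i), ← zpow_natCast q (i + 1)]
    congr 2
    push_cast
    ring
  have hfirst : ∏ i ∈ Finset.range N, (1 + z * q ^ i)
      = ∏ j ∈ Finset.range N, (1 + x * q ^ (-(j : ℤ))) := by
    rw [← Finset.prod_range_reflect (fun j => 1 + x * q ^ (-(j : ℤ))) N]
    refine Finset.prod_congr rfl fun i hi => ?_
    have hiN : i < N := Finset.mem_range.1 hi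
    rw [hzq i, show (1 - (N : ℤ) + i) = -((N - 1 - i : ℕ) : ℤ) from by omega]
  have hxinv : ∀ j : ℕ, (1 + x⁻¹ * q ^ j)
      = x⁻¹ * q ^ j * (1 + x * q ^ (-(j : ℤ))) := by
    intro j
    have h1 : (q : ℂ) ^ j * q ^ (-(j : ℤ)) = 1 := by
      rw [← zpow_natCast q j, ← zpow_add₀ hq0, add_neg_cancel, zpow_zero]
    have h2 : x⁻¹ * x = 1 := inv_mul_cancel₀ hx
    linear_combination (-(x⁻¹ * x)) * h1 - h2
  have hprod2 : ∏ j ∈ Finset.range N, (1 + x⁻¹ * q ^ j)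
      = (x⁻¹) ^ N * q ^ (N * (N - 1) / 2)
        * ∏ j ∈ Finset.range N, (1 + x * q ^ (-(j : ℤ))) := by
    rw [Finset.prod_congr rfl (fun j _ => hxinv j), Finset.prod_mul_distrib,
      Finset.prod_mul_distrib, Finset.prod_const, Finset.card_range,
      Finset.prod_pow_eq_pow_sum, Finset.sum_range_id]
  have hA : ∏ j ∈ Finset.range N, (1 + x * q ^ (j + 1))
      = ∏ i ∈ Finset.range N, (1 + z * q ^ (N + i)) :=
    Finset.prod_congr rfl fun i _ => by rw [hsecond i]
  have hbig : ∏ i ∈ Finset.range (2 * N), (1 + z * q ^ i)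
      = (∏ i ∈ Finset.range N, (1 + z * q ^ i))
        * ∏ i ∈ Finset.range N, (1 + z * q ^ (N + i)) := by
    rw [two_mul, Finset.prod_range_add]
  have step : (∏ j ∈ Finset.range N, (1 + x * q ^ (j + 1)))
      * (∏ j ∈ Finset.range N, (1 + x⁻¹ * q ^ j))
      = (x⁻¹) ^ N * q ^ (N * (N - 1) / 2)
        * ∏ i ∈ Finset.range (2 * N), (1 + z * q ^ i) := by
    rw [hA, hprod2, ← hfirst, hbig]
    ring
  rw [step, gauss hq z (2 * N), Finset.mul_sum]
  refine Finset.sum_congr rfl fun k hk => ?_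
  -- per-term identity
  have hterm : (x⁻¹) ^ N * q ^ (N * (N - 1) / 2)
      * (qb q (2 * N) k * q ^ (k * (k - 1) / 2) * z ^ k)
      = qb q (2 * N) k * q ^ (((k : ℤ) - N) * (((k : ℤ) - N) + 1) / 2)
        * x ^ ((k : ℤ) - N) := by
    have hzk : z ^ k = x ^ k * q ^ (((1 : ℤ) - N) * k) := by
      rw [hz, mul_pow, ← zpow_natCast (q ^ ((1 : ℤ) - N)) k, ← zpow_mul]
    have hxpart : (x⁻¹) ^ N * x ^ k = x ^ ((k : ℤ) - N) := by
      rw [inv_pow, ← zpow_natCast x N, ← zpow_neg, ← zpow_natCast x k,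
        ← zpow_add₀ hx]
      congr 1
      ring
    have hqpart : (q : ℂ) ^ (N * (N - 1) / 2) * (q ^ (k * (k - 1) / 2)
        * q ^ (((1 : ℤ) - N) * k))
        = q ^ (((k : ℤ) - N) * (((k : ℤ) - N) + 1) / 2) := by
      rw [← zpow_natCast q (N * (N - 1) / 2), ← zpow_natCast q (k * (k - 1) / 2),
        ← zpow_add₀ hq0, ← zpow_add₀ hq0]
      congr 1
      have h1 := nat_tri_cast N
      have h2 := nat_tri_cast k
      have h3 := int_tri ((k : ℤ) - N)
      have h4 : (N : ℤ) * ((N : ℤ) - 1) + 2 * ((1 - (N : ℤ)) * k)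
          + (k : ℤ) * ((k : ℤ) - 1)
          = ((k : ℤ) - N) * (((k : ℤ) - N) + 1) := by ring
      linarith
    calc (x⁻¹) ^ N * q ^ (N * (N - 1) / 2)
          * (qb q (2 * N) k * q ^ (k * (k - 1) / 2) * z ^ k)
        = qb q (2 * N) k * ((q : ℂ) ^ (N * (N - 1) / 2) * (q ^ (k * (k - 1) / 2)
            * q ^ (((1 : ℤ) - N) * k))) * ((x⁻¹) ^ N * x ^ k) := by
          rw [hzk]; ring
      _ = qb q (2 * N) k * q ^ (((k : ℤ) - N) * (((k : ℤ) - N) + 1) / 2)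
            * x ^ ((k : ℤ) - N) := by rw [hqpart, hxpart]
  exact hterm

lemma qb_norm_le (hq : ‖q‖ < 1) (n k : ℕ) : ‖qb q n k‖ ≤ Real.exp (3 * Lg q) := by
  rcases le_or_gt k n with h | h
  · rw [qb, if_pos h, norm_div, norm_mul]
    have h1 := norm_Q_le hq n
    have h2 := le_norm_Q hq k
    have h3 := le_norm_Q hq (n - k)
    have hp : (0 : ℝ) < Real.exp (-Lg q) := Real.exp_pos _
    calc ‖Q q n‖ / (‖Q q k‖ * ‖Q q (n - k)‖)
        ≤ Real.exp (Lg q) / (Real.exp (-Lg q) * Real.exp (-Lg q)) := by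
          apply div_le_div₀ (Real.exp_pos _).le h1 (by positivity)
          exact mul_le_mul h2 h3 hp.le (norm_nonneg _)
      _ = Real.exp (3 * Lg q) := by
          rw [← Real.exp_add, ← Real.exp_sub]; ring_nf
  · rw [qb_of_gt h, norm_zero]
    positivity

/-- The dominating function for Tannery's theorem. -/
noncomputable def bnd (q x : ℂ) (m : ℤ) : ℝ :=
  Real.exp (3 * Lg q) * ‖q ^ (m * (m + 1) / 2) * x ^ m‖

lemma ratio_to_zero (hq : ‖q‖ < 1) (c : ℝ) :
    Tendsto (fun n : ℕ => ‖q‖ ^ n * c) atTop (𝓝 0) := by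
  have := (tendsto_pow_atTop_nhds_zero_of_lt_one (norm_nonneg q) hq).mul_const c
  simpa using this

lemma summable_bnd (hq : ‖q‖ < 1) (hq0 : q ≠ 0) {x : ℂ} (hx : x ≠ 0) :
    Summable (bnd q x) := by
  apply Summable.mul_left
  set f : ℤ → ℝ := fun m => ‖q ^ (m * (m + 1) / 2) * x ^ m‖ with hf
  have hfpos : ∀ m : ℤ, 0 < f m := fun m =>
    norm_pos_iff.2 (mul_ne_zero (zpow_ne_zero _ hq0) (zpow_ne_zero _ hx))
  apply Summable.of_nat_of_neg
  · -- positive side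
    have hstep : ∀ n : ℕ, f (n + 1 : ℕ) = f n * (‖q‖ ^ (n + 1) * ‖x‖) := by
      intro n
      have he : ((n : ℤ) + 1) * (((n : ℤ) + 1) + 1) / 2
          = (n : ℤ) * ((n : ℤ) + 1) / 2 + ((n : ℤ) + 1) := by
        have h1 := int_tri (n : ℤ)
        have h2 := int_tri ((n : ℤ) + 1)
        have h3 : ((n : ℤ) + 1) * (((n : ℤ) + 1) + 1)
            = (n : ℤ) * ((n : ℤ) + 1) + 2 * ((n : ℤ) + 1) := by ring
        linarith
      show ‖q ^ (((n : ℕ) + 1 : ℤ) * (((n : ℕ) + 1 : ℤ) + 1) / 2) * x ^ ((n : ℕ) + 1 : ℤ)‖ = _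
      push_cast
      rw [he, zpow_add₀ hq0, zpow_add₀ hx, zpow_one]
      rw [show q ^ ((n : ℤ) + 1) = q ^ (n + 1 : ℕ) by rw [← zpow_natCast]; push_cast; ring_nf]
      simp only [hf, norm_mul, norm_pow]
      ring
    refine summable_of_ratio_test_tendsto_lt_one zero_lt_one
      (Filter.Eventually.of_forall fun n => (hfpos _).ne') ?_
    have : (fun n : ℕ => ‖f (n + 1 : ℕ)‖ / ‖f (n : ℕ)‖)
        = fun n : ℕ => ‖q‖ ^ (n + 1) * ‖x‖ := by
      funext n
      rw [Real.norm_of_nonneg (hfpos _).le, Real.norm_of_nonneg (hfpos _).le,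
        hstep n, mul_comm (f (n : ℕ)), mul_div_assoc, div_self (hfpos _).ne', mul_one]
    rw [this]
    have := ratio_to_zero hq (‖q‖ * ‖x‖) (q := q)
    refine this.congr fun n => ?_
    rw [pow_succ]; ring
  · -- negative side
    have hstep : ∀ n : ℕ, f (-(n + 1 : ℕ)) = f (-(n : ℕ)) * (‖q‖ ^ n * ‖x‖⁻¹) := by
      intro n
      have he : (-((n : ℤ) + 1)) * (-((n : ℤ) + 1) + 1) / 2
          = (-(n : ℤ)) * (-(n : ℤ) + 1) / 2 + (n : ℤ) := by
        have h1 := int_tri (-(n : ℤ))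
        have h2 := int_tri (-((n : ℤ) + 1))
        have h3 : (-((n : ℤ) + 1)) * (-((n : ℤ) + 1) + 1)
            = (-(n : ℤ)) * (-(n : ℤ) + 1) + 2 * (n : ℤ) := by ring
        linarith
      show ‖q ^ ((-((n : ℕ) + 1) : ℤ) * ((-((n : ℕ) + 1) : ℤ) + 1) / 2)
          * x ^ (-((n : ℕ) + 1) : ℤ)‖ = _
      rw [he, zpow_add₀ hq0]
      rw [show (-((n : ℤ) + 1)) = -(n : ℤ) + (-1) by ring, zpow_add₀ hx]
      rw [show q ^ ((n : ℤ)) = q ^ (n : ℕ) by rw [← zpow_natCast]]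
      simp only [hf, norm_mul, norm_pow, zpow_neg_one, norm_inv]
      ring
    refine summable_of_ratio_test_tendsto_lt_one zero_lt_one
      (Filter.Eventually.of_forall fun n => (hfpos _).ne') ?_
    have : (fun n : ℕ => ‖f (-(n + 1 : ℕ))‖ / ‖f (-(n : ℕ))‖)
        = fun n : ℕ => ‖q‖ ^ n * ‖x‖⁻¹ := by
      funext n
      rw [Real.norm_of_nonneg (hfpos _).le, Real.norm_of_nonneg (hfpos _).le,
        hstep n, mul_comm (f (-(n : ℕ))), mul_div_assoc, div_self (hfpos _).ne', mul_one]
    rw [this]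
    exact ratio_to_zero hq ‖x‖⁻¹

lemma jacobi (hq : ‖q‖ < 1) (hq0 : q ≠ 0) {x : ℂ} (hx : x ≠ 0) :
    ∑' m : ℤ, q ^ (m * (m + 1) / 2) * x ^ m
      = (∏' n : ℕ, (1 - q ^ (n + 1)))
        * ((∏' n : ℕ, (1 + x * q ^ (n + 1))) * ∏' n : ℕ, (1 + x⁻¹ * q ^ n)) := by
  have hgeo : Summable fun n : ℕ => ‖q‖ ^ n :=
    summable_geometric_of_lt_one (norm_nonneg q) hq
  -- multipliability of the three products
  have hmul0 : Multipliable fun n : ℕ => 1 - q ^ (n + 1) := by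
    simpa using multipliable_one_sub_mul hq 1
  have hmulA : Multipliable fun n : ℕ => 1 + x * q ^ (n + 1) := by
    have := multipliable_one_add (u := fun n : ℕ => x * q ^ (n + 1)) ?_
    · exact this
    · simp only [norm_mul, norm_pow]
      exact ((hgeo.mul_left (‖x‖ * ‖q‖)).congr fun n => by rw [pow_succ']; ring)
  have hmulC : Multipliable fun n : ℕ => 1 + x⁻¹ * q ^ n := by
    have := multipliable_one_add (u := fun n : ℕ => x⁻¹ * q ^ n) ?_
    · exact this
    · simp only [norm_mul, norm_pow]
      exact hgeo.mul_left ‖x⁻¹‖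
  set P : ℂ := ∏' n : ℕ, (1 - q ^ (n + 1)) with hP
  set A : ℂ := ∏' n : ℕ, (1 + x * q ^ (n + 1)) with hA
  set C : ℂ := ∏' n : ℕ, (1 + x⁻¹ * q ^ n) with hC
  have hQtend : Tendsto (Q q) atTop (𝓝 P) := hmul0.hasProd.tendsto_prod_nat
  have hPne : P ≠ 0 := by
    have h1 : Tendsto (fun n => ‖Q q n‖) atTop (𝓝 ‖P‖) := hQtend.norm
    have h2 : Real.exp (-Lg q) ≤ ‖P‖ :=
      ge_of_tendsto' h1 fun n => le_norm_Q hq n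
    intro h0
    rw [h0, norm_zero] at h2
    exact absurd h2 (not_le.2 (Real.exp_pos _))
  set t : ℤ → ℂ := fun m => q ^ (m * (m + 1) / 2) * x ^ m with ht
  set F : ℕ → ℤ → ℂ := fun N m =>
    (if -(N : ℤ) ≤ m ∧ m ≤ N then qb q (2 * N) (m + N).toNat else 0) * t m with hF
  -- pointwise limits
  have hab : ∀ m : ℤ, Tendsto (fun N => F N m) atTop (𝓝 (P⁻¹ * t m)) := by
    intro m
    apply Tendsto.mul_const
    have h2n : Tendsto (fun N : ℕ => 2 * N) atTop atTop :=
      tendsto_atTop_atTop_of_monotone (fun a b h => by omega) (fun b => ⟨b, by omega⟩)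
    have hplus : Tendsto (fun N : ℕ => (m + N).toNat) atTop atTop :=
      tendsto_atTop_atTop_of_monotone (fun a b h => by omega) (fun b => ⟨b + m.natAbs, by omega⟩)
    have hminus : Tendsto (fun N : ℕ => 2 * N - (m + N).toNat) atTop atTop :=
      tendsto_atTop_atTop_of_monotone (fun a b h => by omega) (fun b => ⟨b + m.natAbs, by omega⟩)
    have hlim : Tendsto (fun N : ℕ =>
        Q q (2 * N) / (Q q ((m + N).toNat) * Q q (2 * N - (m + N).toNat)))
        atTop (𝓝 (P / (P * P))) :=
      (hQtend.comp h2n).div ((hQtend.comp hplus).mul (hQtend.comp hminus))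
        (mul_ne_zero hPne hPne)
    have hPP : P / (P * P) = P⁻¹ := by field_simp
    rw [hPP] at hlim
    refine Tendsto.congr' ?_ hlim
    filter_upwards [eventually_ge_atTop m.natAbs] with N hN
    have hcond : -(N : ℤ) ≤ m ∧ m ≤ N := by omega
    have hle : (m + N).toNat ≤ 2 * N := by omega
    rw [if_pos hcond, qb, if_pos hle]
  -- uniform bound
  have h_bound : ∀ N : ℕ, ∀ m : ℤ, ‖F N m‖ ≤ bnd q x m := by
    intro N m
    rw [hF]
    simp only [norm_mul]
    apply mul_le_mul_of_nonneg_right _ (norm_nonneg (t m))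
    split_ifs with h
    · exact qb_norm_le hq _ _
    · rw [norm_zero]; positivity
  have htan := tendsto_tsum_of_dominated_convergence (summable_bnd hq hq0 hx) hab
    (Filter.Eventually.of_forall h_bound)
  -- identify partial sums with partial products
  have hFsum : ∀ N : ℕ, ∑' m : ℤ, F N m
      = (∏ j ∈ Finset.range N, (1 + x * q ^ (j + 1)))
        * (∏ j ∈ Finset.range N, (1 + x⁻¹ * q ^ j)) := by
    intro N
    have hsupp : ∀ m : ℤ, m ∉ Finset.Icc (-(N : ℤ)) N → F N m = 0 := by
      intro m hm
      rw [Finset.mem_Icc] at hm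
      rw [hF]
      simp only []
      rw [if_neg (by omega), zero_mul]
    rw [tsum_eq_sum hsupp, finite_jacobi hq hq0 hx N]
    have hmap : Finset.Icc (-(N : ℤ)) N
        = (Finset.range (2 * N + 1)).map (⟨fun k : ℕ => (k : ℤ) - N, show Function.Injective (fun k : ℕ => (k : ℤ) - N) from fun a b h => by simpa using h⟩ : ℕ ↪ ℤ) := by
      ext m
      simp only [Finset.mem_Icc, Finset.mem_map, Finset.mem_range,
        Function.Embedding.coeFn_mk]
      constructor
      · intro h
        exact ⟨(m + N).toNat, by omega, by omega⟩
      · rintro ⟨k, hk, rfl⟩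
        omega
    rw [hmap, Finset.sum_map]
    refine Finset.sum_congr rfl fun k hk => ?_
    rw [Finset.mem_range] at hk
    simp only [Function.Embedding.coeFn_mk, hF, ht]
    rw [if_pos (by omega), show ((k : ℤ) - N + N).toNat = k by omega]
    ring
  have hProd : Tendsto (fun N : ℕ =>
      (∏ j ∈ Finset.range N, (1 + x * q ^ (j + 1)))
        * ∏ j ∈ Finset.range N, (1 + x⁻¹ * q ^ j)) atTop (𝓝 (A * C)) :=
    (hmulA.hasProd.tendsto_prod_nat).mul (hmulC.hasProd.tendsto_prod_nat)
  have hkey : ∑' m : ℤ, (P⁻¹ * t m) = A * C := by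
    refine tendsto_nhds_unique ?_ hProd
    refine htan.congr fun N => ?_
    rw [hFsum N]
  rw [tsum_mul_left] at hkey
  have : ∑' m : ℤ, t m = P * (P⁻¹ * ∑' m : ℤ, t m) := by
    rw [← mul_assoc, mul_inv_cancel₀ hPne, one_mul]
  rw [this, hkey]

end JTP


open JTP Filter Topology in
/-- Product expansion of the Jacobi theta function `θ_{1,1}`: for `|q| < 1` and `w ≠ 0`,
`∑_{n ∈ ℤ} (−1)^n q^{n(n+1)/2} w^{2n+1}
  = (w − w⁻¹) ∏_{n ≥ 1} (1 − q^n)(1 − q^n w²)(1 − q^n w⁻²)`. -/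
theorem stmt12 (q w : ℂ) (hq : ‖q‖ < 1) (hw : w ≠ 0) :
    ∑' n : ℤ, (-1 : ℂ) ^ n * q ^ (n * (n + 1) / 2) * w ^ (2 * n + 1)
      = (w - w⁻¹) *
        ∏' n : ℕ, ((1 - q ^ (n + 1)) * (1 - q ^ (n + 1) * w ^ 2)
          * (1 - q ^ (n + 1) * (w⁻¹) ^ 2)) := by
  have hqn : ‖q‖ < 1 := hq
  by_cases hq0 : q = 0
  · subst hq0
    have hsupp : ∀ m : ℤ, m ∉ ({0, -1} : Finset ℤ) →
        (-1 : ℂ) ^ m * (0 : ℂ) ^ (m * (m + 1) / 2) * w ^ (2 * m + 1) = 0 := by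
      intro m hm
      simp only [Finset.mem_insert, Finset.mem_singleton] at hm
      push_neg at hm
      have h2 : 2 ≤ m * (m + 1) := by
        rcases (by omega : m ≤ -2 ∨ 1 ≤ m) with h | h
        · nlinarith
        · nlinarith
      have he : m * (m + 1) / 2 ≠ 0 := by omega
      rw [zero_zpow _ he, mul_zero, zero_mul]
    rw [tsum_eq_sum hsupp]
    have hRHS : ∀ n : ℕ, ((1 - (0:ℂ) ^ (n + 1)) * (1 - (0:ℂ) ^ (n + 1) * w ^ 2)
        * (1 - (0:ℂ) ^ (n + 1) * (w⁻¹) ^ 2)) = 1 := by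
      intro n
      rw [zero_pow (Nat.succ_ne_zero n)]
      ring
    rw [tprod_congr hRHS, tprod_one, mul_one]
    rw [Finset.sum_pair (by decide : (0 : ℤ) ≠ -1)]
    have e0 : (-1 : ℂ) ^ (0 : ℤ) * (0 : ℂ) ^ ((0 : ℤ) * (0 + 1) / 2) * w ^ (2 * (0:ℤ) + 1)
        = w := by norm_num
    have e1 : (-1 : ℂ) ^ (-1 : ℤ) * (0 : ℂ) ^ ((-1 : ℤ) * (-1 + 1) / 2)
        * w ^ (2 * (-1 : ℤ) + 1) = -w⁻¹ := by
      norm_num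
    rw [e0, e1]
    ring
  · -- main case
    set x : ℂ := -w ^ 2 with hxdef
    have hx : x ≠ 0 := by
      rw [hxdef]
      simp [pow_eq_zero_iff, hw]
    have hterm : ∀ n : ℤ, (-1 : ℂ) ^ n * q ^ (n * (n + 1) / 2) * w ^ (2 * n + 1)
        = w * (q ^ (n * (n + 1) / 2) * x ^ n) := by
      intro n
      have h1 : x ^ n = (-1 : ℂ) ^ n * (w ^ (2 : ℕ)) ^ n := by
        rw [hxdef, ← neg_one_mul, mul_zpow]
      have h2 : ((w : ℂ) ^ (2 : ℕ)) ^ n = w ^ (2 * n) := by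
        rw [← zpow_natCast w 2, ← zpow_mul]
        norm_num
      have h3 : w ^ (2 * n + 1) = w ^ (2 * n) * w := by
        rw [zpow_add₀ hw, zpow_one]
      rw [h1, h2, h3]
      ring
    rw [tsum_congr hterm, tsum_mul_left, jacobi hqn hq0 hx]
    -- now massage the products
    have hgeo : Summable fun n : ℕ => ‖q‖ ^ n :=
      summable_geometric_of_lt_one (norm_nonneg q) hq
    have hmul0 : Multipliable fun n : ℕ => 1 - q ^ (n + 1) := by
      simpa using multipliable_one_sub_mul hqn 1
    have hmulA : Multipliable fun n : ℕ => 1 - q ^ (n + 1) * w ^ 2 :=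
      multipliable_one_sub_mul hqn (w ^ 2)
    have hmulB : Multipliable fun n : ℕ => 1 - q ^ (n + 1) * (w⁻¹) ^ 2 :=
      multipliable_one_sub_mul hqn ((w⁻¹) ^ 2)
    have hmulC : Multipliable fun n : ℕ => 1 + x⁻¹ * q ^ n := by
      have := multipliable_one_add (u := fun n : ℕ => x⁻¹ * q ^ n) ?_
      · exact this
      · simp only [norm_mul, norm_pow]
        exact hgeo.mul_left ‖x⁻¹‖
    -- A matches
    have hAeq : (∏' n : ℕ, (1 + x * q ^ (n + 1)))
        = ∏' n : ℕ, (1 - q ^ (n + 1) * w ^ 2) :=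
      tprod_congr fun n => by rw [hxdef]; ring
    -- C splits
    have hxinv : x⁻¹ = -(w⁻¹) ^ 2 := by
      rw [hxdef, inv_pow]
      field_simp
    have hCeq : (∏' n : ℕ, (1 + x⁻¹ * q ^ n))
        = (1 - (w⁻¹) ^ 2) * ∏' n : ℕ, (1 - q ^ (n + 1) * (w⁻¹) ^ 2) := by
      have hmulC1 : Multipliable fun n : ℕ => 1 + x⁻¹ * q ^ (n + 1) := by
        have := multipliable_one_add (u := fun n : ℕ => x⁻¹ * q ^ (n + 1)) ?_
        · exact this
        · simp only [norm_mul, norm_pow]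
          exact ((hgeo.mul_left (‖x⁻¹‖ * ‖q‖)).congr fun n => by rw [pow_succ']; ring)
      rw [tprod_eq_zero_mul' (f := fun n : ℕ => 1 + x⁻¹ * q ^ n) hmulC1]
      congr 1
      · rw [hxinv]; ring
      · exact tprod_congr fun n => by rw [hxinv]; ring
    rw [hAeq, hCeq]
    -- split the RHS product
    have hsplit : (∏' n : ℕ, ((1 - q ^ (n + 1)) * (1 - q ^ (n + 1) * w ^ 2)
          * (1 - q ^ (n + 1) * (w⁻¹) ^ 2)))
        = ((∏' n : ℕ, (1 - q ^ (n + 1))) * ∏' n : ℕ, (1 - q ^ (n + 1) * w ^ 2))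
          * ∏' n : ℕ, (1 - q ^ (n + 1) * (w⁻¹) ^ 2) := by
      rw [(hmul0.mul hmulA).tprod_mul hmulB, hmul0.tprod_mul hmulA]
    rw [hsplit]
    have hww : w * (1 - (w⁻¹) ^ 2) = w - w⁻¹ := by
      have h1 : w * w⁻¹ = 1 := mul_inv_cancel₀ hw
      have h2 : w * (1 - (w⁻¹) ^ 2) = w - (w * w⁻¹) * w⁻¹ := by ring
      rw [h2, h1, one_mul]
    calc w * ((∏' n : ℕ, (1 - q ^ (n + 1))) * ((∏' n : ℕ, (1 - q ^ (n + 1) * w ^ 2))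
          * ((1 - (w⁻¹) ^ 2) * ∏' n : ℕ, (1 - q ^ (n + 1) * (w⁻¹) ^ 2))))
        = (w * (1 - (w⁻¹) ^ 2)) * (((∏' n : ℕ, (1 - q ^ (n + 1)))
            * ∏' n : ℕ, (1 - q ^ (n + 1) * w ^ 2))
            * ∏' n : ℕ, (1 - q ^ (n + 1) * (w⁻¹) ^ 2)) := by ring
      _ = (w - w⁻¹) * (((∏' n : ℕ, (1 - q ^ (n + 1)))
            * ∏' n : ℕ, (1 - q ^ (n + 1) * w ^ 2))
            * ∏' n : ℕ, (1 - q ^ (n + 1) * (w⁻¹) ^ 2)) := by rw [hww]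
end

section
/- Fix an integer b ≥ 0. In ℤ[[q,t]] one has the identity ∏_{l≥1} (1 − q^{l−1} t^l)^{−1} (1 − q^l t^l)^{−b} (1 − q^{l+1} t^l)^{−1} = ∑_{n≥0} t^n ∑_{α ⊢ n} q^{n − |α|} ∏_{i≥1} h_{a_i(α)}(q), where for a partition α of n, a_i(α) is the number of parts equal to i, |α| = ∑ a_i(α), and h_m(q) = ∑_{i+j+k=m} C(j+b−1, j) q^{j+2k} (with the convention C(b−1, 0) = 1, so h_0 = 1). -/
open PowerSeries Finset

/-- `h_m(q) = ∑_{i+j+k=m} C(j+b−1, j) q^{j+2k} ∈ ℤ[[q]]`, the coefficient of `u^m` in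
`(1−u)⁻¹ (1−qu)⁻ᵇ (1−q²u)⁻¹`, i.e. the class of the `m`-th symmetric power of a variety `S`
with `[S] = 1 + b[𝔸¹] + [𝔸²]`.  (With `ℕ`-subtraction, `C(j+b−1, j)` gives the convention
`C(b−1,0) = 1`, so `h_0 = 1`.) -/
noncomputable def hPoly (b : ℕ) (m : ℕ) : PowerSeries ℤ :=
  ∑ x ∈ Finset.Nat.antidiagonalTuple 3 m,
    ((Nat.choose (x 1 + b - 1) (x 1) : ℤ)) • (PowerSeries.X : PowerSeries ℤ) ^ (x 1 + 2 * x 2)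

variable {R : Type*} [CommRing R]

noncomputable def geomS (c : R) : PowerSeries R := PowerSeries.mk fun n => c ^ n

lemma geomS_eq_rescale (c : R) : geomS c = rescale c (PowerSeries.mk 1) := by
  ext n; simp [geomS, coeff_rescale, coeff_mk]

lemma rescale_X' (c : R) : rescale c (X : PowerSeries R) = C (R := R) c * X := by
  ext n
  rcases eq_or_ne n 1 with h | h <;>
    simp [coeff_rescale, coeff_X, h]

lemma one_sub_mul_geomS (c : R) : (1 - C (R := R) c * X) * geomS c = 1 := by
  rw [geomS_eq_rescale,
    show (1 - C (R := R) c * X) = rescale c (1 - X) by rw [map_sub, map_one, rescale_X'],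
    ← map_mul, mul_comm, mk_one_mul_one_sub_eq_one, map_one]

lemma coeff_geomS_pow (c : R) (b j : ℕ) :
    PowerSeries.coeff (R := R) j ((geomS c) ^ b) = ((j + b - 1).choose j : R) * c ^ j := by
  cases b with
  | zero =>
    rcases eq_or_ne j 0 with rfl | h
    · simp
    · simp [h, Nat.choose_eq_zero_of_lt (by omega : j - 1 < j)]
  | succ d =>
    rw [geomS_eq_rescale, ← map_pow, mk_one_pow_eq_mk_choose_add, coeff_rescale, coeff_mk]
    rw [show j + (d + 1) - 1 = d + j by omega, mul_comm]
    rw [Nat.choose_symm_add, add_comm d j]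

/-- substitute `X ↦ X^l` -/
noncomputable def expandS (l : ℕ) (f : PowerSeries R) : PowerSeries R :=
  PowerSeries.mk fun n => if l ∣ n then PowerSeries.coeff (R := R) (n / l) f else 0

variable {l : ℕ}

lemma coeff_expandS (f : PowerSeries R) (n : ℕ) :
    PowerSeries.coeff (R := R) n (expandS l f) = if l ∣ n then PowerSeries.coeff (R := R) (n / l) f else 0 :=
  coeff_mk _ _

lemma coeff_expandS_mul (hl : 0 < l) (f : PowerSeries R) (k : ℕ) :
    PowerSeries.coeff (R := R) (l * k) (expandS l f) = PowerSeries.coeff (R := R) k f := by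
  rw [coeff_expandS, if_pos ⟨k, rfl⟩, Nat.mul_div_cancel_left _ hl]

lemma expandS_one (hl : 0 < l) : expandS l (1 : PowerSeries R) = 1 := by
  ext n
  rcases eq_or_ne n 0 with rfl | h
  · simp [coeff_expandS]
  · rw [coeff_expandS]
    have : l ∣ n → n / l ≠ 0 := fun hd => by
      rcases hd with ⟨c, rfl⟩
      rcases Nat.eq_zero_or_pos c with rfl | hc
      · simp at h
      · rw [Nat.mul_div_cancel_left _ hl]; omega
    split_ifs with hd
    · simp [coeff_one, this hd, h]
    · simp [coeff_one, h]

lemma expandS_C (hl : 0 < l) (c : R) : expandS l (C (R := R) c) = C (R := R) c := by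
  ext n
  rcases eq_or_ne n 0 with rfl | h
  · simp [coeff_expandS]
  · rw [coeff_expandS]
    split_ifs with hd
    · rcases hd with ⟨c', rfl⟩
      have hc' : c' ≠ 0 := by rintro rfl; simp at h
      rw [Nat.mul_div_cancel_left _ hl]
      simp [coeff_C, hc', h]
    · simp [coeff_C, h]

lemma expandS_X (hl : 0 < l) : expandS l (X : PowerSeries R) = X ^ l := by
  ext n
  rw [coeff_expandS, coeff_X_pow]
  split_ifs with hd h h
  · rcases hd with ⟨c, rfl⟩
    rw [Nat.mul_div_cancel_left _ hl, coeff_X, if_pos (mul_left_cancel₀ hl.ne' (by omega))]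
  · rcases hd with ⟨c, rfl⟩
    rw [Nat.mul_div_cancel_left _ hl, coeff_X, if_neg (by rintro rfl; omega)]
  · exact absurd ⟨1, by omega⟩ hd
  · rfl

lemma expandS_mul (hl : 0 < l) (f g : PowerSeries R) :
    expandS l (f * g) = expandS l f * expandS l g := by
  ext n
  rw [coeff_expandS]
  conv_rhs => rw [PowerSeries.coeff_mul]
  have hcong : ∀ p ∈ Finset.HasAntidiagonal.antidiagonal n,
      PowerSeries.coeff (R := R) p.1 (expandS l f) * PowerSeries.coeff (R := R) p.2 (expandS l g)
      = if l ∣ p.1 ∧ l ∣ p.2 then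
          PowerSeries.coeff (R := R) (p.1 / l) f * PowerSeries.coeff (R := R) (p.2 / l) g else 0 := by
    intro p _
    rw [coeff_expandS, coeff_expandS]
    by_cases h1 : l ∣ p.1 <;> by_cases h2 : l ∣ p.2 <;> simp [h1, h2]
  rw [Finset.sum_congr rfl hcong, Finset.sum_ite, Finset.sum_const_zero, add_zero]
  by_cases hn : l ∣ n
  · rw [if_pos hn]
    obtain ⟨k, rfl⟩ := hn
    rw [PowerSeries.coeff_mul, Nat.mul_div_cancel_left _ hl]
    refine Finset.sum_nbij' (fun p => (l * p.1, l * p.2)) (fun p => (p.1 / l, p.2 / l))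
      ?_ ?_ ?_ ?_ ?_
    · intro p hp
      simp only [Finset.HasAntidiagonal.mem_antidiagonal] at hp
      simp only [Finset.mem_filter, Finset.HasAntidiagonal.mem_antidiagonal]
      exact ⟨by rw [← Nat.mul_add, hp], ⟨p.1, rfl⟩, ⟨p.2, rfl⟩⟩
    · intro p hp
      simp only [Finset.mem_filter, Finset.HasAntidiagonal.mem_antidiagonal] at hp
      obtain ⟨hsum, ⟨a, ha⟩, ⟨c, hc⟩⟩ := hp
      simp only [Finset.HasAntidiagonal.mem_antidiagonal, ha, hc, Nat.mul_div_cancel_left _ hl]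
      refine mul_left_cancel₀ hl.ne' ?_
      rw [Nat.mul_add, ← ha, ← hc, hsum]
    · intro p _
      simp [Nat.mul_div_cancel_left _ hl]
    · intro p hp
      simp only [Finset.mem_filter, Finset.HasAntidiagonal.mem_antidiagonal] at hp
      obtain ⟨_, ⟨a, ha⟩, ⟨c, hc⟩⟩ := hp
      simp [ha, hc, Nat.mul_div_cancel_left _ hl, Prod.ext_iff]
    · intro p _
      simp [Nat.mul_div_cancel_left _ hl]
  · rw [if_neg hn]
    refine (Finset.sum_eq_zero fun p hp => absurd ?_ hn).symm
    simp only [Finset.mem_filter, Finset.HasAntidiagonal.mem_antidiagonal] at hp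
    exact hp.1 ▸ Nat.dvd_add hp.2.1 hp.2.2

lemma expandS_sub (f g : PowerSeries R) :
    expandS l (f - g) = expandS l f - expandS l g := by
  ext n
  simp only [coeff_expandS, map_sub]
  split_ifs <;> simp

lemma sum_adt_three {M : Type*} [AddCommMonoid M] (f : ℕ → ℕ → ℕ → M) (m : ℕ) :
    ∑ x ∈ Finset.Nat.antidiagonalTuple 3 m, f (x 0) (x 1) (x 2)
      = ∑ p ∈ Finset.HasAntidiagonal.antidiagonal m, ∑ q ∈ Finset.HasAntidiagonal.antidiagonal p.2, f p.1 q.1 q.2 := by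
  conv_rhs => rw [Finset.sum_sigma']
  refine Finset.sum_nbij'
    (fun x => (⟨(x 0, x 1 + x 2), (x 1, x 2)⟩ : (_ : ℕ × ℕ) × ℕ × ℕ))
    (fun σ => ![σ.1.1, σ.2.1, σ.2.2]) ?_ ?_ ?_ ?_ ?_
  · intro x hx
    rw [Finset.Nat.mem_antidiagonalTuple, Fin.sum_univ_three] at hx
    simp only [Finset.mem_sigma, Finset.HasAntidiagonal.mem_antidiagonal]
    exact ⟨by omega, trivial⟩
  · intro σ hσ
    simp only [Finset.mem_sigma, Finset.HasAntidiagonal.mem_antidiagonal] at hσ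
    rw [Finset.Nat.mem_antidiagonalTuple, Fin.sum_univ_three]
    simp only [Matrix.cons_val_zero, Matrix.cons_val_one, Matrix.head_cons,
      Matrix.cons_val_two, Matrix.tail_cons]
    omega
  · intro x _
    funext i
    fin_cases i <;> rfl
  · intro σ hσ
    simp only [Finset.mem_sigma, Finset.HasAntidiagonal.mem_antidiagonal] at hσ
    obtain ⟨⟨p1, p2⟩, ⟨q1, q2⟩⟩ := σ
    simp only at hσ ⊢
    simp only [Matrix.cons_val_zero, Matrix.cons_val_one, Matrix.head_cons,
      Matrix.cons_val_two, Matrix.tail_cons]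
    obtain ⟨h1, h2⟩ := hσ
    subst h2
    rfl
  · intro x _
    rfl

lemma coeff_triple (b k j : ℕ) :
    PowerSeries.coeff (R := PowerSeries ℤ) j
      (geomS ((X : PowerSeries ℤ) ^ k)
        * ((geomS ((X : PowerSeries ℤ) ^ (k + 1))) ^ b
          * geomS ((X : PowerSeries ℤ) ^ (k + 2))))
    = (X : PowerSeries ℤ) ^ (k * j) * hPoly b j := by
  rw [hPoly, sum_adt_three (fun a s t =>
      ((Nat.choose (s + b - 1) s : ℤ)) • (PowerSeries.X : PowerSeries ℤ) ^ (s + 2 * t)) j,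
    PowerSeries.coeff_mul, Finset.mul_sum]
  refine Finset.sum_congr rfl fun p hp => ?_
  rw [Finset.HasAntidiagonal.mem_antidiagonal] at hp
  rw [PowerSeries.coeff_mul, Finset.mul_sum, Finset.mul_sum]
  refine Finset.sum_congr rfl fun q hq => ?_
  rw [Finset.HasAntidiagonal.mem_antidiagonal] at hq
  rw [coeff_geomS_pow]
  simp only [geomS, coeff_mk]
  rw [zsmul_eq_mul]
  push_cast
  rw [← pow_mul, ← pow_mul, ← pow_mul]
  have hexp : k * p.1 + ((k + 1) * q.1 + (k + 2) * q.2) = k * j + (q.1 + 2 * q.2) := by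
    obtain ⟨a, r⟩ := p
    obtain ⟨s, t⟩ := q
    simp only at hp hq ⊢
    subst hp hq
    ring
  have hX : (X : PowerSeries ℤ) ^ (k * p.1)
        * ((X : PowerSeries ℤ) ^ ((k + 1) * q.1) * (X : PowerSeries ℤ) ^ ((k + 2) * q.2))
      = (X : PowerSeries ℤ) ^ (k * j) * (X : PowerSeries ℤ) ^ (q.1 + 2 * q.2) := by
    rw [← pow_add, ← pow_add, ← pow_add, hexp]
  linear_combination (((q.1 + b - 1).choose q.1 : ℕ) : PowerSeries ℤ) * hX

lemma expandS_pow (hl : 0 < l) (f : PowerSeries R) (b : ℕ) :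
    expandS l (f ^ b) = (expandS l f) ^ b := by
  induction b with
  | zero => simpa using expandS_one hl
  | succ d ih => rw [pow_succ, expandS_mul hl, ih, pow_succ]

noncomputable def FF (b k : ℕ) : PowerSeries (PowerSeries ℤ) :=
  expandS (k + 1) (geomS ((X : PowerSeries ℤ) ^ k)
    * ((geomS ((X : PowerSeries ℤ) ^ (k + 1))) ^ b * geomS ((X : PowerSeries ℤ) ^ (k + 2))))

lemma coeff_FF (b k n : ℕ) :
    PowerSeries.coeff (R := PowerSeries ℤ) n (FF b k)
      = if (k + 1) ∣ n then
          (X : PowerSeries ℤ) ^ (k * (n / (k + 1))) * hPoly b (n / (k + 1)) else 0 := by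
  rw [FF, coeff_expandS]
  split_ifs with h
  · rw [coeff_triple]
  · rfl

lemma one_sub_expand (hl : 0 < l) (c : R) :
    1 - C (R := R) c * X ^ l = expandS l (1 - C (R := R) c * X) := by
  rw [expandS_sub, expandS_one hl, expandS_mul hl, expandS_C hl, expandS_X hl]

lemma factor_mul_FF (b k : ℕ) :
    ((1 - PowerSeries.C (R := PowerSeries ℤ) ((PowerSeries.X : PowerSeries ℤ) ^ k)
        * (PowerSeries.X : PowerSeries (PowerSeries ℤ)) ^ (k + 1))
      * (1 - PowerSeries.C (R := PowerSeries ℤ) ((PowerSeries.X : PowerSeries ℤ) ^ (k + 1))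
        * (PowerSeries.X : PowerSeries (PowerSeries ℤ)) ^ (k + 1)) ^ b
      * (1 - PowerSeries.C (R := PowerSeries ℤ) ((PowerSeries.X : PowerSeries ℤ) ^ (k + 2))
        * (PowerSeries.X : PowerSeries (PowerSeries ℤ)) ^ (k + 1))) * FF b k = 1 := by
  have hl : 0 < k + 1 := Nat.succ_pos k
  rw [FF, one_sub_expand hl, one_sub_expand hl, one_sub_expand hl,
    ← expandS_pow hl, ← expandS_mul hl, ← expandS_mul hl, ← expandS_mul hl]
  rw [show (1 - C (R := PowerSeries ℤ) ((X : PowerSeries ℤ) ^ k) * X)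
        * (1 - C (R := PowerSeries ℤ) ((X : PowerSeries ℤ) ^ (k + 1)) * X) ^ b
        * (1 - C (R := PowerSeries ℤ) ((X : PowerSeries ℤ) ^ (k + 2)) * X)
        * (geomS ((X : PowerSeries ℤ) ^ k)
          * ((geomS ((X : PowerSeries ℤ) ^ (k + 1))) ^ b * geomS ((X : PowerSeries ℤ) ^ (k + 2))))
      = ((1 - C (R := PowerSeries ℤ) ((X : PowerSeries ℤ) ^ k) * X) * geomS ((X : PowerSeries ℤ) ^ k))
        * (((1 - C (R := PowerSeries ℤ) ((X : PowerSeries ℤ) ^ (k + 1)) * X)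
            * geomS ((X : PowerSeries ℤ) ^ (k + 1))) ^ b)
        * ((1 - C (R := PowerSeries ℤ) ((X : PowerSeries ℤ) ^ (k + 2)) * X)
            * geomS ((X : PowerSeries ℤ) ^ (k + 2)))
      by rw [mul_pow]; ring]
  rw [one_sub_mul_geomS, one_sub_mul_geomS, one_sub_mul_geomS, one_pow, mul_one, mul_one]
  exact expandS_one hl

lemma invOfUnit_eq_of_mul_eq_one {f g : PowerSeries R} (hc : constantCoeff (R := R) f = 1)
    (h : f * g = 1) : PowerSeries.invOfUnit f 1 = g := by
  have h2 : f * PowerSeries.invOfUnit f 1 = 1 := PowerSeries.mul_invOfUnit f 1 (by simp [hc])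
  calc PowerSeries.invOfUnit f 1 = PowerSeries.invOfUnit f 1 * (f * g) := by rw [h, mul_one]
    _ = (f * PowerSeries.invOfUnit f 1) * g := by ring
    _ = g := by rw [h2, one_mul]

lemma hPoly_zero (b : ℕ) : hPoly b 0 = 1 := by
  rw [hPoly, Finset.Nat.antidiagonalTuple_zero_right, Finset.sum_singleton]
  simp

lemma part_mem_Icc {n : ℕ} (α : n.Partition) {l : ℕ} (hl : l ∈ α.parts) :
    l ∈ Finset.Icc 1 n := by
  rw [Finset.mem_Icc]
  exact ⟨α.parts_pos hl, (Multiset.le_sum_of_mem hl).trans_eq α.parts_sum⟩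

lemma count_eq_zero_of_not_mem_Icc {n : ℕ} (α : n.Partition) {l : ℕ}
    (hl : l ∉ Finset.Icc 1 n) : α.parts.count l = 0 :=
  Multiset.count_eq_zero_of_notMem fun h => hl (part_mem_Icc α h)

lemma parts_toFinset_subset {n m : ℕ} (α : n.Partition) (hnm : n ≤ m) :
    α.parts.toFinset ⊆ Finset.Icc 1 m := fun x hx => by
  have h := Finset.mem_Icc.1 (part_mem_Icc α (Multiset.mem_toFinset.1 hx))
  exact Finset.mem_Icc.2 ⟨h.1, h.2.trans hnm⟩

lemma sum_mul_count {n m : ℕ} (α : n.Partition) (hnm : n ≤ m) :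
    ∑ l ∈ Finset.Icc 1 m, l * α.parts.count l = n := by
  have h0 : α.parts.sum = ∑ a ∈ α.parts.toFinset, α.parts.count a • a := by
    simpa using Finset.sum_multiset_map_count α.parts id
  have h1 : ∑ l ∈ Finset.Icc 1 m, α.parts.count l • l = α.parts.sum := by
    rw [h0]
    exact (Finset.sum_subset (parts_toFinset_subset α hnm) (fun x _ hx => by
      simp [Multiset.count_eq_zero_of_notMem (fun h => hx (Multiset.mem_toFinset.2 h))])).symm
  calc ∑ l ∈ Finset.Icc 1 m, l * α.parts.count l
      = ∑ l ∈ Finset.Icc 1 m, α.parts.count l • l := by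
        refine Finset.sum_congr rfl fun x _ => ?_
        rw [smul_eq_mul, mul_comm]
    _ = n := h1.trans α.parts_sum

lemma sum_count {n m : ℕ} (α : n.Partition) (hnm : n ≤ m) :
    ∑ l ∈ Finset.Icc 1 m, α.parts.count l = Multiset.card α.parts := by
  rw [← Multiset.toFinset_sum_count_eq α.parts]
  exact (Finset.sum_subset (parts_toFinset_subset α hnm) (fun x _ hx => by
    simp [Multiset.count_eq_zero_of_notMem (fun h => hx (Multiset.mem_toFinset.2 h))])).symm

/-- For a fixed integer `b ≥ 0`, the identity in `ℤ[[q,t]]`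
`∏_{l≥1} (1−q^{l−1}t^l)⁻¹ (1−q^l t^l)⁻ᵇ (1−q^{l+1}t^l)⁻¹
  = ∑_{n≥0} t^n ∑_{α⊢n} q^{n−|α|} ∏_{i≥1} h_{a_i(α)}(q)`,
stated coefficientwise in `t`: for `m ≥ n` the factors with `l > n` do not affect the
`t^n`-coefficient, so the infinite product is captured by all partial products `∏_{l=1}^m`.
Here `q = X : ℤ[[q]]`, the outer variable is `t`, `a_i(α)` is the number of parts of `α`
equal to `i` and `|α|` is the number of parts. -/
theorem stmt14 (b : ℕ) (n m : ℕ) (hnm : n ≤ m) :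
    PowerSeries.coeff (R := PowerSeries ℤ) n
      (∏ l ∈ Finset.Icc 1 m,
        PowerSeries.invOfUnit
          ((1 - PowerSeries.C (R := PowerSeries ℤ) ((PowerSeries.X : PowerSeries ℤ) ^ (l - 1))
              * (PowerSeries.X : PowerSeries (PowerSeries ℤ)) ^ l)
            * (1 - PowerSeries.C (R := PowerSeries ℤ) ((PowerSeries.X : PowerSeries ℤ) ^ l)
              * (PowerSeries.X : PowerSeries (PowerSeries ℤ)) ^ l) ^ b
            * (1 - PowerSeries.C (R := PowerSeries ℤ) ((PowerSeries.X : PowerSeries ℤ) ^ (l + 1))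
              * (PowerSeries.X : PowerSeries (PowerSeries ℤ)) ^ l)) 1)
    = ∑ α : n.Partition,
        (PowerSeries.X : PowerSeries ℤ) ^ (n - α.parts.card)
          * ∏ i ∈ Finset.Icc 1 n, hPoly b (α.parts.count i) := by
  classical
  have h1 : ∀ l ∈ Finset.Icc 1 m,
      PowerSeries.invOfUnit
          ((1 - PowerSeries.C (R := PowerSeries ℤ) ((PowerSeries.X : PowerSeries ℤ) ^ (l - 1))
              * (PowerSeries.X : PowerSeries (PowerSeries ℤ)) ^ l)
            * (1 - PowerSeries.C (R := PowerSeries ℤ) ((PowerSeries.X : PowerSeries ℤ) ^ l)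
              * (PowerSeries.X : PowerSeries (PowerSeries ℤ)) ^ l) ^ b
            * (1 - PowerSeries.C (R := PowerSeries ℤ) ((PowerSeries.X : PowerSeries ℤ) ^ (l + 1))
              * (PowerSeries.X : PowerSeries (PowerSeries ℤ)) ^ l)) 1 = FF b (l - 1) := by
    intro l hl
    rw [Finset.mem_Icc] at hl
    obtain ⟨k, rfl⟩ : ∃ k, l = k + 1 := ⟨l - 1, by omega⟩
    simp only [Nat.add_sub_cancel]
    refine invOfUnit_eq_of_mul_eq_one ?_ (factor_mul_FF b k)
    simp [constantCoeff_X, zero_pow]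
  rw [Finset.prod_congr rfl h1, PowerSeries.coeff_prod]
  have h2 : ∀ d ∈ Finset.finsuppAntidiag (Finset.Icc 1 m) n,
      (∏ l ∈ Finset.Icc 1 m, PowerSeries.coeff (R := PowerSeries ℤ) (d l) (FF b (l - 1)))
      = if ∀ l ∈ Finset.Icc 1 m, l ∣ d l then
          ∏ l ∈ Finset.Icc 1 m,
            ((X : PowerSeries ℤ) ^ ((l - 1) * (d l / l)) * hPoly b (d l / l))
        else 0 := by
    intro d _
    split_ifs with hdvd
    · refine Finset.prod_congr rfl fun l hl => ?_
      have h1l : 1 ≤ l := (Finset.mem_Icc.1 hl).1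
      have hdl := hdvd l hl
      obtain ⟨k, rfl⟩ : ∃ k, l = k + 1 := ⟨l - 1, by omega⟩
      simp only [Nat.add_sub_cancel]
      rw [coeff_FF, if_pos hdl]
    · push_neg at hdvd
      obtain ⟨l, hl, hndvd⟩ := hdvd
      refine Finset.prod_eq_zero hl ?_
      have h1l : 1 ≤ l := (Finset.mem_Icc.1 hl).1
      obtain ⟨k, rfl⟩ : ∃ k, l = k + 1 := ⟨l - 1, by omega⟩
      simp only [Nat.add_sub_cancel]
      rw [coeff_FF, if_neg hndvd]
  rw [Finset.sum_congr rfl h2, Finset.sum_ite, Finset.sum_const_zero, add_zero]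
  refine (Finset.sum_bij
    (fun (α : n.Partition) (_ : α ∈ Finset.univ) =>
      Finsupp.onFinset (Finset.Icc 1 m) (fun l => l * α.parts.count l) (fun a ha => by
        have ha' : a * α.parts.count a ≠ 0 := ha
        have hc : α.parts.count a ≠ 0 := fun h0 => ha' (by rw [h0, mul_zero])
        have := part_mem_Icc α (Multiset.count_ne_zero.1 hc)
        rw [Finset.mem_Icc] at this ⊢
        exact ⟨this.1, this.2.trans hnm⟩))
    ?_ ?_ ?_ ?_).symm
  · -- maps into filter
    intro α _
    simp only [Finset.mem_filter, Finset.mem_finsuppAntidiag]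
    refine ⟨⟨?_, Finsupp.support_onFinset_subset⟩, ?_⟩
    · simpa [Finsupp.onFinset_apply] using sum_mul_count α hnm
    · intro l _
      exact ⟨α.parts.count l, by simp [Finsupp.onFinset_apply]⟩
  · -- injective
    intro α _ α' _ h
    ext1
    ext l
    rcases Nat.eq_zero_or_pos l with rfl | hl
    · rw [Multiset.count_eq_zero_of_notMem (fun hm => lt_irrefl 0 (α.parts_pos hm)),
        Multiset.count_eq_zero_of_notMem (fun hm => lt_irrefl 0 (α'.parts_pos hm))]
    · have := DFunLike.congr_fun h l
      simp only [Finsupp.onFinset_apply] at this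
      exact Nat.eq_of_mul_eq_mul_left hl this
  · -- surjective
    intro d hd
    simp only [Finset.mem_filter, Finset.mem_finsuppAntidiag] at hd
    obtain ⟨⟨hsum, hsupp⟩, hdvd⟩ := hd
    refine ⟨⟨∑ l ∈ Finset.Icc 1 m, Multiset.replicate (d l / l) l, ?_, ?_⟩,
      Finset.mem_univ _, ?_⟩
    · intro i hi
      rw [Multiset.mem_sum] at hi
      obtain ⟨l, hl, hil⟩ := hi
      rw [Multiset.eq_of_mem_replicate hil]
      exact (Finset.mem_Icc.1 hl).1
    · rw [Multiset.sum_sum]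
      calc ∑ l ∈ Finset.Icc 1 m, (Multiset.replicate (d l / l) l).sum
          = ∑ l ∈ Finset.Icc 1 m, d l := by
            refine Finset.sum_congr rfl fun l hl => ?_
            rw [Multiset.sum_replicate, smul_eq_mul, Nat.div_mul_cancel (hdvd l hl)]
        _ = n := hsum
    · ext l
      simp only [Finsupp.onFinset_apply]
      have hcount : Multiset.count l (∑ l' ∈ Finset.Icc 1 m, Multiset.replicate (d l' / l') l')
          = if l ∈ Finset.Icc 1 m then d l / l else 0 := by
        rw [Multiset.count_sum']
        rw [Finset.sum_congr rfl (fun l' _ => Multiset.count_replicate l l' (d l' / l'))]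
        exact Finset.sum_ite_eq' _ _ _
      rw [hcount]
      split_ifs with hmem
      · exact Nat.mul_div_cancel' (hdvd l hmem)
      · rw [mul_zero]
        exact (Finsupp.notMem_support_iff.1 fun hs => hmem (hsupp hs)).symm
  · -- values agree
    intro α _
    simp only [Finsupp.onFinset_apply]
    have hstep : ∀ l ∈ Finset.Icc 1 m,
        (X : PowerSeries ℤ) ^ ((l - 1) * (l * α.parts.count l / l)) * hPoly b (l * α.parts.count l / l)
          = (X : PowerSeries ℤ) ^ ((l - 1) * α.parts.count l) * hPoly b (α.parts.count l) := by
      intro l hl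
      rw [Nat.mul_div_cancel_left _ (Finset.mem_Icc.1 hl).1]
    rw [Finset.prod_congr rfl hstep, Finset.prod_mul_distrib, Finset.prod_pow_eq_pow_sum]
    have hsum := sum_mul_count α hnm
    have hcard := sum_count α hnm
    have hexp : ∑ l ∈ Finset.Icc 1 m, (l - 1) * α.parts.count l = n - Multiset.card α.parts := by
      have e1 : ∀ l ∈ Finset.Icc 1 m,
          (l - 1) * α.parts.count l + α.parts.count l = l * α.parts.count l := by
        intro l hl
        have h1l : 1 ≤ l := (Finset.mem_Icc.1 hl).1
        obtain ⟨k, rfl⟩ : ∃ k, l = k + 1 := ⟨l - 1, by omega⟩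
        simp only [Nat.add_sub_cancel]
        ring
      have e2 : (∑ l ∈ Finset.Icc 1 m, (l - 1) * α.parts.count l)
          + ∑ l ∈ Finset.Icc 1 m, α.parts.count l = n := by
        rw [← Finset.sum_add_distrib, Finset.sum_congr rfl e1, hsum]
      omega
    have hprod : ∏ l ∈ Finset.Icc 1 n, hPoly b (α.parts.count l)
        = ∏ l ∈ Finset.Icc 1 m, hPoly b (α.parts.count l) := by
      refine Finset.prod_subset (Finset.Icc_subset_Icc_right hnm) fun x _ hx => ?_
      rw [count_eq_zero_of_not_mem_Icc α hx, hPoly_zero]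
    rw [hexp, hprod]
end
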